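/- arXiv:1308.4450 — 6 statements merged into one kernel-verified Lean document; each statement's English description precedes it below -/
import Mathlib

section
/- Let Q be symmetric, f ∈ ℝⁿ, r > 0. If there exist x̄ ∈ ℝⁿ and μ̄ ∈ ℝ satisfying (Q + μ̄I)x̄ = f, ‖x̄‖ ≤ r, Q + μ̄I positive semidefinite, μ̄ ≥ 0, and μ̄(‖x̄‖ − r) = 0, then x̄ is a global minimizer of P(x) = xᵀQx − 2fᵀx over {x : ‖x‖ ≤ r}. -/
open Matrix

/-!
Write `A = Q + μ̄ I`. Since `A x̄ = f` and `A` is symmetric, completing the square gives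
`P(x) + μ̄ ‖x‖² = (x - x̄)ᵀ A (x - x̄) + P(x̄) + μ̄ ‖x̄‖²`, so positive semidefiniteness of `A`
makes `x̄` a minimizer of `P + μ̄ ‖·‖²`. Complementary slackness turns `μ̄ ‖x̄‖²` into `μ̄ r²`,
which bounds `μ̄ ‖x‖²` for every feasible `x`.
-/

section QuadraticObjective

variable {ι : Type*} [Fintype ι]

def quadraticObjective (A : Matrix ι ι ℝ) (f x : ι → ℝ) : ℝ :=
  x ⬝ᵥ A *ᵥ x - 2 * (f ⬝ᵥ x)

theorem quadraticObjective_add_smul_one [DecidableEq ι] (Q : Matrix ι ι ℝ) (μ : ℝ)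
    (f x : ι → ℝ) :
    quadraticObjective (Q + μ • 1) f x = quadraticObjective Q f x + μ * (x ⬝ᵥ x) := by
  simp only [quadraticObjective, add_mulVec, smul_mulVec, one_mulVec, dotProduct_add,
    dotProduct_smul, smul_eq_mul]
  ring

theorem Matrix.IsSymm.dotProduct_mulVec_comm {A : Matrix ι ι ℝ} (hA : A.IsSymm) (x y : ι → ℝ) :
    x ⬝ᵥ A *ᵥ y = y ⬝ᵥ A *ᵥ x := by
  rw [dotProduct_mulVec, ← mulVec_transpose, hA.eq, dotProduct_comm]

theorem quadraticObjective_eq_add_of_mulVec_eq {A : Matrix ι ι ℝ} (hA : A.IsSymm)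
    {f xb : ι → ℝ} (hf : A *ᵥ xb = f) (x : ι → ℝ) :
    quadraticObjective A f x =
      (x - xb) ⬝ᵥ A *ᵥ (x - xb) + quadraticObjective A f xb := by
  have hcross : f ⬝ᵥ x = xb ⬝ᵥ A *ᵥ x := by
    rw [← hf, dotProduct_comm, hA.dotProduct_mulVec_comm]
  have hdiag : f ⬝ᵥ xb = xb ⬝ᵥ A *ᵥ xb := by rw [← hf, dotProduct_comm]
  simp only [quadraticObjective, mulVec_sub, dotProduct_sub, sub_dotProduct, hcross, hdiag]
  rw [hA.dotProduct_mulVec_comm x xb]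
  ring

theorem Matrix.PosSemidef.quadraticObjective_le_of_mulVec_eq {A : Matrix ι ι ℝ} (hA : A.PosSemidef)
    {f xb : ι → ℝ} (hf : A *ᵥ xb = f) (x : ι → ℝ) :
    quadraticObjective A f xb ≤ quadraticObjective A f x := by
  have hsymm : A.IsSymm := isHermitian_iff_isSymm.mp hA.isHermitian
  have hsq : 0 ≤ (x - xb) ⬝ᵥ A *ᵥ (x - xb) := by
    simpa only [star_trivial] using hA.dotProduct_mulVec_nonneg (x - xb)
  rw [quadraticObjective_eq_add_of_mulVec_eq hsymm hf x]
  linarith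

end QuadraticObjective

theorem mul_le_mul_of_complementary_slackness {μ r s t : ℝ} (hμ : 0 ≤ μ) (hs : 0 ≤ s)
    (hslack : μ * (√s - r) = 0) (ht : √t ≤ r) :
    μ * t ≤ μ * s := by
  rcases mul_eq_zero.mp hslack with rfl | hsr
  · simp
  · have hr : 0 ≤ r := (Real.sqrt_nonneg t).trans ht
    have hs_eq : s = r ^ 2 := (Real.sqrt_eq_iff_eq_sq hs hr).mp (sub_eq_zero.mp hsr)
    rw [hs_eq]
    exact mul_le_mul_of_nonneg_left ((Real.sqrt_le_left hr).mp ht) hμ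

theorem stmt_1_general {n : ℕ} (Q : Matrix (Fin n) (Fin n) ℝ) (f : Fin n → ℝ) (r : ℝ)
    (xb : Fin n → ℝ) (mub : ℝ)
    (hkkt1 : (Q + mub • (1 : Matrix (Fin n) (Fin n) ℝ)).mulVec xb = f)
    (hkkt3 : (Q + mub • (1 : Matrix (Fin n) (Fin n) ℝ)).PosSemidef)
    (hkkt3' : 0 ≤ mub)
    (hkkt4 : mub * (Real.sqrt (xb ⬝ᵥ xb) - r) = 0) :
    ∀ x : Fin n → ℝ, Real.sqrt (x ⬝ᵥ x) ≤ r →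
      (xb ⬝ᵥ Q.mulVec xb - 2 * (f ⬝ᵥ xb)) ≤ (x ⬝ᵥ Q.mulVec x - 2 * (f ⬝ᵥ x)) := by
  intro x hx
  have hmin := hkkt3.quadraticObjective_le_of_mulVec_eq hkkt1 x
  rw [quadraticObjective_add_smul_one, quadraticObjective_add_smul_one] at hmin
  have hpenalty : mub * (x ⬝ᵥ x) ≤ mub * (xb ⬝ᵥ xb) :=
    mul_le_mul_of_complementary_slackness hkkt3'
      (by simpa only [star_trivial] using dotProduct_star_self_nonneg xb) hkkt4 hx
  change quadraticObjective Q f xb ≤ quadraticObjective Q f x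
  linarith

/-- KKT sufficiency: if (Q + μI)xb = f, ‖xb‖ ≤ r, Q + μI ⪰ 0, μ ≥ 0 and
μ(‖xb‖ − r) = 0, then xb globally minimizes P(x) = xᵀQx − 2fᵀx over the ball. -/
theorem stmt_1 {n : ℕ} (Q : Matrix (Fin n) (Fin n) ℝ) (f : Fin n → ℝ) (r : ℝ)
    (hQsym : Q.IsSymm) (hr : 0 < r) (xb : Fin n → ℝ) (mub : ℝ)
    (hkkt1 : (Q + mub • (1 : Matrix (Fin n) (Fin n) ℝ)).mulVec xb = f)
    (hkkt2 : Real.sqrt (xb ⬝ᵥ xb) ≤ r)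
    (hkkt3 : (Q + mub • (1 : Matrix (Fin n) (Fin n) ℝ)).PosSemidef)
    (hkkt3' : 0 ≤ mub)
    (hkkt4 : mub * (Real.sqrt (xb ⬝ᵥ xb) - r) = 0) :
    ∀ x : Fin n → ℝ, Real.sqrt (x ⬝ᵥ x) ≤ r →
      (xb ⬝ᵥ Q.mulVec xb - 2 * (f ⬝ᵥ xb)) ≤ (x ⬝ᵥ Q.mulVec x - 2 * (f ⬝ᵥ x)) :=
  stmt_1_general Q f r xb mub hkkt1 hkkt3 hkkt3' hkkt4
end

section
/- Let Q be symmetric and σ̄ > 0 be such that G = Q + σ̄I is positive definite and ‖G⁻¹f‖ = r. Then x̄ = G⁻¹f is a global minimizer of P(x) = xᵀQx − 2fᵀx over the ball {x : ‖x‖ ≤ r}, and P(x̄) = −fᵀG⁻¹f − r²σ̄. -/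
/-!
Put `G = Q + σ̄ I` and `x̄ = G⁻¹ f`. Since `G x̄ = f`, completing the square gives
`P(x) = (x - x̄)ᵀ G (x - x̄) - fᵀ x̄ - σ̄ ‖x‖²`. For `‖x‖ ≤ r = ‖x̄‖` each `x`-dependent term
is at least its value at `x̄`: the first because `G` is positive semidefinite, the second
because `σ̄ ≥ 0`. The same identity at `x̄` gives `P(x̄) = -fᵀ x̄ - σ̄ r²`.
-/

open Matrix

def quadObjective {ι R : Type*} [Fintype ι] [CommRing R] (Q : Matrix ι ι R) (f x : ι → R) : R :=
  x ⬝ᵥ Q *ᵥ x - 2 * (f ⬝ᵥ x)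

namespace quadObjective

section CommRing

variable {ι R : Type*} [Fintype ι] [CommRing R]

lemma add_smul_one [DecidableEq ι] (Q : Matrix ι ι R) (σ : R) (f x : ι → R) :
    quadObjective (Q + σ • 1) f x = quadObjective Q f x + σ * (x ⬝ᵥ x) := by
  simp only [quadObjective, add_mulVec, smul_mulVec, one_mulVec, dotProduct_add,
    dotProduct_smul, smul_eq_mul]
  ring

lemma eq_neg_dotProduct_of_mulVec_eq {G : Matrix ι ι R} {f xb : ι → R} (h : G *ᵥ xb = f) :
    quadObjective G f xb = -(f ⬝ᵥ xb) := by
  rw [quadObjective, h, dotProduct_comm]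
  ring

lemma eq_sub_of_mulVec_eq {G : Matrix ι ι R} (hG : G.IsSymm) {f xb : ι → R}
    (h : G *ᵥ xb = f) (x : ι → R) :
    quadObjective G f x = (x - xb) ⬝ᵥ G *ᵥ (x - xb) - f ⬝ᵥ xb := by
  have hsymm : xb ⬝ᵥ G *ᵥ x = f ⬝ᵥ x := by
    rw [dotProduct_mulVec, ← mulVec_transpose, hG.eq, h]
  rw [quadObjective, mulVec_sub, dotProduct_sub, sub_dotProduct, sub_dotProduct, hsymm, h,
    dotProduct_comm x f, dotProduct_comm xb f]
  ring

end CommRing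

variable {ι : Type*} [Fintype ι] [DecidableEq ι]

lemma le_of_posSemidef {Q : Matrix ι ι ℝ} {σ : ℝ} (hσ : 0 ≤ σ) (hG : (Q + σ • 1).PosSemidef)
    {f xb x : ι → ℝ} (h : (Q + σ • 1) *ᵥ xb = f) (hx : x ⬝ᵥ x ≤ xb ⬝ᵥ xb) :
    quadObjective Q f xb ≤ quadObjective Q f x := by
  have hGsymm : (Q + σ • 1).IsSymm := isHermitian_iff_isSymm.1 hG.isHermitian
  have hsq := hG.dotProduct_mulVec_nonneg (x - xb)
  have hPx := eq_sub_of_mulVec_eq hGsymm h x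
  have hPxb := eq_neg_dotProduct_of_mulVec_eq h
  rw [add_smul_one] at hPx hPxb
  simp only [star_trivial] at hsq
  linarith [mul_le_mul_of_nonneg_left hx hσ]

end quadObjective

theorem stmt_3_general {n : ℕ} (Q : Matrix (Fin n) (Fin n) ℝ) (f : Fin n → ℝ) (r : ℝ)
    (sb : ℝ) (hsb : 0 < sb)
    (hpd : (Q + sb • (1 : Matrix (Fin n) (Fin n) ℝ)).PosDef)
    (hbd : Real.sqrt (((Q + sb • (1 : Matrix (Fin n) (Fin n) ℝ))⁻¹.mulVec f) ⬝ᵥ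
      ((Q + sb • (1 : Matrix (Fin n) (Fin n) ℝ))⁻¹.mulVec f)) = r) :
    (∀ x : Fin n → ℝ, Real.sqrt (x ⬝ᵥ x) ≤ r →
      (((Q + sb • (1 : Matrix (Fin n) (Fin n) ℝ))⁻¹.mulVec f) ⬝ᵥ
          Q.mulVec ((Q + sb • (1 : Matrix (Fin n) (Fin n) ℝ))⁻¹.mulVec f)
        - 2 * (f ⬝ᵥ ((Q + sb • (1 : Matrix (Fin n) (Fin n) ℝ))⁻¹.mulVec f)))
        ≤ (x ⬝ᵥ Q.mulVec x - 2 * (f ⬝ᵥ x))) ∧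
    (((Q + sb • (1 : Matrix (Fin n) (Fin n) ℝ))⁻¹.mulVec f) ⬝ᵥ
        Q.mulVec ((Q + sb • (1 : Matrix (Fin n) (Fin n) ℝ))⁻¹.mulVec f)
      - 2 * (f ⬝ᵥ ((Q + sb • (1 : Matrix (Fin n) (Fin n) ℝ))⁻¹.mulVec f)))
      = -(f ⬝ᵥ ((Q + sb • (1 : Matrix (Fin n) (Fin n) ℝ))⁻¹.mulVec f)) - r^2 * sb := by
  set G := Q + sb • (1 : Matrix (Fin n) (Fin n) ℝ)
  set xb := G⁻¹ *ᵥ f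
  have hGxb : G *ᵥ xb = f := by
    rw [mulVec_mulVec, mul_nonsing_inv _ ((isUnit_iff_isUnit_det G).1 hpd.isUnit), one_mulVec]
  have hnorm : xb ⬝ᵥ xb = r ^ 2 := by
    rw [← hbd, Real.sq_sqrt (by simpa using dotProduct_star_self_nonneg xb)]
  refine ⟨fun x hx => ?_, ?_⟩
  · exact quadObjective.le_of_posSemidef hsb.le hpd.posSemidef hGxb
      (hnorm ▸ (Real.sqrt_le_iff.1 hx).2)
  · have hval := quadObjective.eq_neg_dotProduct_of_mulVec_eq hGxb
    rw [quadObjective.add_smul_one, hnorm] at hval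
    unfold quadObjective at hval
    linarith

/-- Complementary-dual principle: if sb > 0, G = Q + sb·I is positive definite and
‖G⁻¹f‖ = r, then xb = G⁻¹f globally minimizes P over the ball and
P(xb) = −fᵀG⁻¹f − r²·sb. -/
theorem stmt_3 {n : ℕ} (Q : Matrix (Fin n) (Fin n) ℝ) (f : Fin n → ℝ) (r : ℝ)
    (hQsym : Q.IsSymm) (hr : 0 < r) (sb : ℝ) (hsb : 0 < sb)
    (hpd : (Q + sb • (1 : Matrix (Fin n) (Fin n) ℝ)).PosDef)
    (hbd : Real.sqrt (((Q + sb • (1 : Matrix (Fin n) (Fin n) ℝ))⁻¹.mulVec f) ⬝ᵥ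
      ((Q + sb • (1 : Matrix (Fin n) (Fin n) ℝ))⁻¹.mulVec f)) = r) :
    (∀ x : Fin n → ℝ, Real.sqrt (x ⬝ᵥ x) ≤ r →
      (((Q + sb • (1 : Matrix (Fin n) (Fin n) ℝ))⁻¹.mulVec f) ⬝ᵥ
          Q.mulVec ((Q + sb • (1 : Matrix (Fin n) (Fin n) ℝ))⁻¹.mulVec f)
        - 2 * (f ⬝ᵥ ((Q + sb • (1 : Matrix (Fin n) (Fin n) ℝ))⁻¹.mulVec f)))
        ≤ (x ⬝ᵥ Q.mulVec x - 2 * (f ⬝ᵥ x))) ∧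
    (((Q + sb • (1 : Matrix (Fin n) (Fin n) ℝ))⁻¹.mulVec f) ⬝ᵥ
        Q.mulVec ((Q + sb • (1 : Matrix (Fin n) (Fin n) ℝ))⁻¹.mulVec f)
      - 2 * (f ⬝ᵥ ((Q + sb • (1 : Matrix (Fin n) (Fin n) ℝ))⁻¹.mulVec f)))
      = -(f ⬝ᵥ ((Q + sb • (1 : Matrix (Fin n) (Fin n) ℝ))⁻¹.mulVec f)) - r^2 * sb :=
  stmt_3_general Q f r sb hsb hpd hbd
end

section
/- The function P^d(σ) = −fᵀ(Q+σI)⁻¹f − r²σ is strictly concave on the open interval (−λ₁, ∞), where λ₁ is the smallest eigenvalue of Q, provided f ≠ 0. -/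
/-!
Diagonalize `Q = U diag(d) Uᵀ` with `U` orthogonal. For `σ > -λ₁` every `d i + σ` is
positive, and `fᵀ (Q + σ I)⁻¹ f = ∑ i, c i ^ 2 / (d i + σ)` with `c = Uᵀ f ≠ 0`. Each summand
is convex in `σ`, strictly so when `c i ≠ 0`, hence `P^d` is minus a strictly convex function
minus a linear one.
-/

open Matrix Set

section Convexity

variable {𝕜 E β ι : Type*}

theorem StrictConvexOn.smul [CommSemiring 𝕜] [PartialOrder 𝕜] [AddCommMonoid E]
    [AddCommMonoid β] [PartialOrder β] [SMul 𝕜 E] [Module 𝕜 β] [PosSMulStrictMono 𝕜 β]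
    {s : Set E} {f : E → β} {c : 𝕜} (hc : 0 < c) (hf : StrictConvexOn 𝕜 s f) :
    StrictConvexOn 𝕜 s fun x => c • f x :=
  ⟨hf.1, fun x hx y hy hxy a b ha hb hab =>
    calc
      c • f (a • x + b • y) < c • (a • f x + b • f y) :=
        smul_lt_smul_of_pos_left (hf.2 hx hy hxy ha hb hab) hc
      _ = a • c • f x + b • c • f y := by rw [smul_add, smul_comm c, smul_comm c]⟩

variable [Semiring 𝕜] [PartialOrder 𝕜] [AddCommMonoid E] [SMul 𝕜 E]
  [AddCommMonoid β] [PartialOrder β] [Module 𝕜 β] {s : Set E}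

theorem ConvexOn.sum [IsOrderedAddMonoid β] {t : Finset ι} {f : ι → E → β}
    (hs : Convex 𝕜 s) (hf : ∀ i ∈ t, ConvexOn 𝕜 s (f i)) :
    ConvexOn 𝕜 s fun x => ∑ i ∈ t, f i x := by
  simp_rw [← Finset.sum_apply]
  exact Finset.sum_induction f (ConvexOn 𝕜 s) (fun _ _ => ConvexOn.add)
    (convexOn_const 0 hs) hf

theorem StrictConvexOn.sum_of_mem [IsOrderedCancelAddMonoid β] {t : Finset ι}
    {f : ι → E → β} (hs : Convex 𝕜 s) (hf : ∀ i ∈ t, ConvexOn 𝕜 s (f i)) {j : ι} (hj : j ∈ t)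
    (hfj : StrictConvexOn 𝕜 s (f j)) :
    StrictConvexOn 𝕜 s fun x => ∑ i ∈ t, f i x := by
  classical
  simp_rw [← Finset.add_sum_erase t _ hj]
  exact hfj.add_convexOn (ConvexOn.sum hs fun i hi => hf i (Finset.mem_of_mem_erase hi))

end Convexity

theorem strictConvexOn_div_add {w : ℝ} (hw : 0 < w) (a : ℝ) :
    StrictConvexOn ℝ (Ioi (-a)) fun x => w / (a + x) := by
  have h :=
    ((strictConvexOn_zpow (m := -1) (by norm_num) (by norm_num)).translate_right a).smul hw
  have hdom : (fun x : ℝ => a + x) ⁻¹' Ioi 0 = Ioi (-a) := by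
    ext x; simp [neg_lt_iff_pos_add]
  rw [hdom] at h
  refine h.congr fun x _ => ?_
  simp [div_eq_mul_inv]

theorem convexOn_div_add {w : ℝ} (hw : 0 ≤ w) (a : ℝ) :
    ConvexOn ℝ (Ioi (-a)) fun x => w / (a + x) := by
  rcases hw.eq_or_lt with rfl | hw
  · simpa using convexOn_const (0 : ℝ) (convex_Ioi (-a))
  · exact (strictConvexOn_div_add hw a).convexOn

variable {n : Type*} [Fintype n] [DecidableEq n]

theorem Matrix.dotProduct_mul_diagonal_mul_star_mulVec (U : Matrix n n ℝ) (w f : n → ℝ) :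
    f ⬝ᵥ (U * diagonal w * star U) *ᵥ f = ∑ i, w i * (star U *ᵥ f) i ^ 2 := by
  rw [← mulVec_mulVec, ← mulVec_mulVec, dotProduct_mulVec, star_eq_conjTranspose,
    conjTranspose_eq_transpose_of_trivial, ← mulVec_transpose, dotProduct, Finset.sum_congr rfl]
  intro i _
  rw [mulVec_diagonal]
  ring

variable {Q : Matrix n n ℝ} (hQ : Q.IsHermitian)

theorem Matrix.IsHermitian.le_eigenvalues {m : ℝ}
    (hm : ∀ (μ : ℝ) (v : n → ℝ), v ≠ 0 → Q *ᵥ v = μ • v → m ≤ μ) (i : n) :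
    m ≤ hQ.eigenvalues i :=
  hm _ _ (by simpa using hQ.eigenvectorBasis.orthonormal.ne_zero i) (hQ.mulVec_eigenvectorBasis i)

open Unitary in
theorem Matrix.IsHermitian.add_smul_one_eq_conjStarAlgAut (σ : ℝ) :
    Q + σ • (1 : Matrix n n ℝ) =
      conjStarAlgAut ℝ _ hQ.eigenvectorUnitary (diagonal fun i => hQ.eigenvalues i + σ) := by
  have hdiag : diagonal (fun i => hQ.eigenvalues i + σ) =
      diagonal hQ.eigenvalues + algebraMap ℝ _ σ := by
    rw [algebraMap_eq_diagonal, diagonal_add]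
    rfl
  conv_lhs => rw [hQ.spectral_theorem]
  rw [hdiag, map_add, AlgHomClass.commutes, Algebra.algebraMap_eq_smul_one]
  simp

open Unitary in
theorem Matrix.IsHermitian.inv_add_smul_one_eq_conjStarAlgAut {σ : ℝ}
    (hσ : ∀ i, hQ.eigenvalues i + σ ≠ 0) :
    (Q + σ • (1 : Matrix n n ℝ))⁻¹ =
      conjStarAlgAut ℝ _ hQ.eigenvectorUnitary (diagonal fun i => (hQ.eigenvalues i + σ)⁻¹) := by
  refine inv_eq_left_inv ?_
  rw [hQ.add_smul_one_eq_conjStarAlgAut, ← map_mul, diagonal_mul_diagonal]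
  simp [inv_mul_cancel₀ (hσ _)]

theorem Matrix.IsHermitian.dotProduct_inv_add_smul_one_mulVec {σ : ℝ}
    (hσ : ∀ i, hQ.eigenvalues i + σ ≠ 0) (f : n → ℝ) :
    f ⬝ᵥ (Q + σ • (1 : Matrix n n ℝ))⁻¹ *ᵥ f =
      ∑ i, (star (hQ.eigenvectorUnitary : Matrix n n ℝ) *ᵥ f) i ^ 2 / (hQ.eigenvalues i + σ) := by
  rw [hQ.inv_add_smul_one_eq_conjStarAlgAut hσ, Unitary.conjStarAlgAut_apply,
    dotProduct_mul_diagonal_mul_star_mulVec]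
  simp only [div_eq_inv_mul]

theorem strictConvexOn_sum_sq_div_add {ι : Type*} [Fintype ι] {c d : ι → ℝ} (hc : c ≠ 0)
    {m : ℝ} (hm : ∀ i, m ≤ d i) :
    StrictConvexOn ℝ (Ioi (-m)) fun σ => ∑ i, c i ^ 2 / (d i + σ) := by
  obtain ⟨j, hj⟩ : ∃ j, c j ≠ 0 := Function.ne_iff.mp hc
  have hdom : ∀ i, Ioi (-m) ⊆ Ioi (-d i) := fun i => Ioi_subset_Ioi (neg_le_neg (hm i))
  exact StrictConvexOn.sum_of_mem (f := fun i σ => c i ^ 2 / (d i + σ)) (convex_Ioi _)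
    (fun i _ => (convexOn_div_add (sq_nonneg (c i)) (d i)).subset (hdom i) (convex_Ioi _))
    (Finset.mem_univ j)
    ((strictConvexOn_div_add (by positivity) (d j)).subset (hdom j) (convex_Ioi _))

theorem stmt_5_general {n : ℕ} (Q : Matrix (Fin n) (Fin n) ℝ) (f : Fin n → ℝ) (r : ℝ)
    (hQsym : Q.IsSymm) (hf : f ≠ 0) (lam1 : ℝ)
    (hlam1_min : ∀ (μ : ℝ) (v : Fin n → ℝ), v ≠ 0 → Q.mulVec v = μ • v → lam1 ≤ μ) :
    StrictConcaveOn ℝ (Set.Ioi (-lam1))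
      (fun σ : ℝ =>
        -(f ⬝ᵥ ((Q + σ • (1 : Matrix (Fin n) (Fin n) ℝ))⁻¹.mulVec f)) - r^2 * σ) := by
  have hQ : Q.IsHermitian := by
    rwa [IsHermitian, conjTranspose_eq_transpose_of_trivial]
  have hUf : star (hQ.eigenvectorUnitary : Matrix (Fin n) (Fin n) ℝ) *ᵥ f ≠ 0 := by
    intro h
    apply hf
    rw [← one_mulVec f, ← Unitary.mul_star_self_of_mem hQ.eigenvectorUnitary.2,
      ← mulVec_mulVec, h, mulVec_zero]
  have hsum := strictConvexOn_sum_sq_div_add hUf (hQ.le_eigenvalues hlam1_min)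
  refine (hsum.neg.sub_convexOn ((convexOn_id (convex_Ioi _)).smul (sq_nonneg r))).congr
    fun σ hσ => ?_
  have hpos : ∀ i, hQ.eigenvalues i + σ ≠ 0 := fun i =>
    ne_of_gt (by linarith [hQ.le_eigenvalues hlam1_min i, mem_Ioi.mp hσ])
  simp [hQ.dotProduct_inv_add_smul_one_mulVec hpos]

/-- For f ≠ 0, the dual function Pd(σ) = −fᵀ(Q+σI)⁻¹f − r²σ is strictly concave on
(−λ₁, ∞), where λ₁ is the smallest eigenvalue of Q. -/
theorem stmt_5 {n : ℕ} (Q : Matrix (Fin n) (Fin n) ℝ) (f : Fin n → ℝ) (r : ℝ)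
    (hQsym : Q.IsSymm) (hr : 0 < r) (hf : f ≠ 0) (lam1 : ℝ)
    (hlam1_eig : ∃ v : Fin n → ℝ, v ≠ 0 ∧ Q.mulVec v = lam1 • v)
    (hlam1_min : ∀ (μ : ℝ) (v : Fin n → ℝ), v ≠ 0 → Q.mulVec v = μ • v → lam1 ≤ μ) :
    StrictConcaveOn ℝ (Set.Ioi (-lam1))
      (fun σ : ℝ =>
        -(f ⬝ᵥ ((Q + σ • (1 : Matrix (Fin n) (Fin n) ℝ))⁻¹.mulVec f)) - r^2 * σ) :=
  stmt_5_general Q f r hQsym hf lam1 hlam1_min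
end

section
/- If Σ_{i=1}^k f̂ᵢ² = 0 and Σ_{i=k+1}^n f̂ᵢ²/(λᵢ−λ₁)² > r², then the function ψ(σ) = Σ_{i=k+1}^n f̂ᵢ²/(λᵢ+σ)² − r² has a unique zero in (−λ₁, ∞). -/
/-! The function σ ↦ Σ wᵢ/(λᵢ + σ)² with nonnegative, not all vanishing weights is continuous and
strictly decreasing on [−λ₁, ∞) and tends to 0 at infinity. Since it exceeds r² > 0 at −λ₁, the
intermediate value theorem gives a zero of ψ in (−λ₁, ∞), and strict monotonicity makes it unique. -/

open Set Filter Topology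

theorem existsUnique_mem_Ioi_eq_of_strictAntiOn {f : ℝ → ℝ} {a y L : ℝ}
    (hcont : ContinuousOn f (Ici a)) (hanti : StrictAntiOn f (Ici a)) (hya : y < f a)
    (hlim : Tendsto f atTop (𝓝 L)) (hLy : L < y) :
    ∃! x, x ∈ Ioi a ∧ f x = y := by
  obtain ⟨b, hfb, hab⟩ :=
    ((hlim.eventually (gt_mem_nhds hLy)).and (eventually_ge_atTop a)).exists
  obtain ⟨x, ⟨hax, -⟩, hfx⟩ :=
    intermediate_value_Ioc' hab (hcont.mono Icc_subset_Ici_self) ⟨hfb.le, hya⟩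
  refine ⟨x, ⟨hax, hfx⟩, fun z ⟨haz, hfz⟩ => ?_⟩
  exact hanti.injOn (mem_Ici.2 haz.le) (mem_Ici.2 hax.le) (hfz.trans hfx.symm)

section WeightedInverseSquares

variable {ι : Type*} (s : Finset ι) (w d : ι → ℝ) {c : ℝ}

theorem continuousOn_sum_div_add_sq (hd : ∀ i ∈ s, c < d i) :
    ContinuousOn (fun σ => ∑ i ∈ s, w i / (d i + σ) ^ 2) (Ici (-c)) := by
  refine continuousOn_finsetSum s fun i hi => continuousOn_const.div (by fun_prop) fun σ hσ => ?_
  have : -c ≤ σ := hσ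
  exact pow_ne_zero 2 (by linarith [hd i hi])

theorem strictAntiOn_sum_div_add_sq (hd : ∀ i ∈ s, c < d i) (hw : ∀ i ∈ s, 0 ≤ w i)
    (hne : ∃ i ∈ s, w i ≠ 0) :
    StrictAntiOn (fun σ => ∑ i ∈ s, w i / (d i + σ) ^ 2) (Ici (-c)) := by
  intro σ hσ τ hτ hστ
  have hσ : -c ≤ σ := hσ
  have hpos : ∀ i ∈ s, 0 < d i + σ := fun i hi => by linarith [hd i hi]
  have hsq : ∀ i ∈ s, (d i + σ) ^ 2 < (d i + τ) ^ 2 := fun i hi => by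
    have := hpos i hi
    gcongr
  refine Finset.sum_lt_sum (fun i hi => ?_) ?_
  · exact div_le_div_of_nonneg_left (hw i hi) (by positivity [hpos i hi]) (hsq i hi).le
  · obtain ⟨i, hi, hwi⟩ := hne
    have hwi : 0 < w i := (hw i hi).lt_of_ne' hwi
    exact ⟨i, hi, div_lt_div_of_pos_left hwi (by positivity [hpos i hi]) (hsq i hi)⟩

theorem tendsto_sum_div_add_sq_atTop :
    Tendsto (fun σ => ∑ i ∈ s, w i / (d i + σ) ^ 2) atTop (𝓝 0) := by
  rw [← Finset.sum_const_zero (s := s)]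
  refine tendsto_finsetSum s fun i _ => tendsto_const_nhds.div_atTop ?_
  exact (tendsto_pow_atTop two_ne_zero).comp (tendsto_atTop_add_const_left _ _ tendsto_id)

end WeightedInverseSquares

theorem stmt_9_general {n : ℕ} (lam fh : Fin n → ℝ) (r : ℝ) (k : ℕ) (lam1 : ℝ)
    (hr : 0 < r)
    (hhigh : ∀ i : Fin n, k ≤ (i : ℕ) → lam1 < lam i)
    (hsum : r^2 < ∑ i ∈ Finset.univ.filter (fun i : Fin n => k ≤ (i : ℕ)),
      (fh i)^2 / (lam i - lam1)^2) :
    ∃! σ : ℝ, σ ∈ Set.Ioi (-lam1) ∧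
      (∑ i ∈ Finset.univ.filter (fun i : Fin n => k ≤ (i : ℕ)),
        (fh i)^2 / (lam i + σ)^2) - r^2 = 0 := by
  set S := Finset.univ.filter (fun i : Fin n => k ≤ (i : ℕ))
  have hd : ∀ i ∈ S, lam1 < lam i := fun i hi => hhigh i (Finset.mem_filter.1 hi).2
  have hne : ∃ i ∈ S, fh i ^ 2 ≠ 0 := by
    by_contra! h
    rw [Finset.sum_eq_zero fun i hi => by rw [h i hi, zero_div]] at hsum
    exact (sq_nonneg r).not_gt hsum
  simp_rw [sub_eq_zero]
  refine existsUnique_mem_Ioi_eq_of_strictAntiOn (continuousOn_sum_div_add_sq S _ lam hd)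
    (strictAntiOn_sum_div_add_sq S _ lam hd (fun i _ => sq_nonneg _) hne) ?_
    (tendsto_sum_div_add_sq_atTop S _ lam) (by positivity)
  simpa only [← sub_eq_add_neg] using hsum

/-- If Σ_{i<k} fhᵢ² = 0 and Σ_{i≥k} fhᵢ²/(λᵢ−λ₁)² > r², then
ψ(σ) = Σ_{i≥k} fhᵢ²/(λᵢ+σ)² − r² has a unique zero in (−λ₁, ∞). -/
theorem stmt_9 {n : ℕ} (lam fh : Fin n → ℝ) (r : ℝ) (k : ℕ) (lam1 : ℝ)
    (hr : 0 < r) (hk : 0 < k) (hkn : k ≤ n)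
    (hlow : ∀ i : Fin n, (i : ℕ) < k → lam i = lam1)
    (hhigh : ∀ i : Fin n, k ≤ (i : ℕ) → lam1 < lam i)
    (hf0 : ∑ i ∈ Finset.univ.filter (fun i : Fin n => (i : ℕ) < k), (fh i)^2 = 0)
    (hsum : r^2 < ∑ i ∈ Finset.univ.filter (fun i : Fin n => k ≤ (i : ℕ)),
      (fh i)^2 / (lam i - lam1)^2) :
    ∃! σ : ℝ, σ ∈ Set.Ioi (-lam1) ∧
      (∑ i ∈ Finset.univ.filter (fun i : Fin n => k ≤ (i : ℕ)),
        (fh i)^2 / (lam i + σ)^2) - r^2 = 0 :=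
  stmt_9_general lam fh r k lam1 hr hhigh hsum
end

section
/- For f ≠ 0, the function ψ(σ) = fᵀ(Q+σI)⁻²f − r² is strictly decreasing and strictly convex on (−λ₁, ∞), where λ₁ is the smallest eigenvalue of Q. -/
/-!
Diagonalize `Q = U diag(λ) Uᵀ` with `U` orthogonal. Then `(Q + σI)⁻² = U diag((λᵢ + σ)⁻²) Uᵀ`, so
`ψ(σ) = ∑ᵢ gᵢ² (λᵢ + σ)⁻² - r²` with `g = Uᵀ f ≠ 0`. Every summand is strictly decreasing and
strictly convex on `(-λᵢ, ∞) ⊇ (-λ₁, ∞)`, and at least one weight `gᵢ²` is positive.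
-/

open Matrix Set

theorem strictAntiOn_sum_mul {ι α : Type*} [Preorder α] {s : Set α} {t : Finset ι}
    {c : ι → ℝ} {h : ι → α → ℝ} (hc : ∀ i ∈ t, 0 ≤ c i) (hpos : ∃ i ∈ t, 0 < c i)
    (hh : ∀ i ∈ t, StrictAntiOn (h i) s) :
    StrictAntiOn (fun x => ∑ i ∈ t, c i * h i x) s := by
  obtain ⟨i₀, hi₀, hc₀⟩ := hpos
  intro x hx y hy hxy
  exact Finset.sum_lt_sum
    (fun i hi => mul_le_mul_of_nonneg_left (hh i hi hx hy hxy).le (hc i hi))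
    ⟨i₀, hi₀, mul_lt_mul_of_pos_left (hh i₀ hi₀ hx hy hxy) hc₀⟩

theorem strictConvexOn_sum_mul {ι E : Type*} [AddCommMonoid E] [Module ℝ E] {s : Set E}
    {t : Finset ι} {c : ι → ℝ} {h : ι → E → ℝ} (hc : ∀ i ∈ t, 0 ≤ c i)
    (hpos : ∃ i ∈ t, 0 < c i) (hh : ∀ i ∈ t, StrictConvexOn ℝ s (h i)) :
    StrictConvexOn ℝ s (fun x => ∑ i ∈ t, c i * h i x) := by
  obtain ⟨i₀, hi₀, hc₀⟩ := hpos
  refine ⟨(hh i₀ hi₀).1, fun x hx y hy hxy a b ha hb hab => ?_⟩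
  calc ∑ i ∈ t, c i * h i (a • x + b • y)
      < ∑ i ∈ t, c i * (a • h i x + b • h i y) :=
        Finset.sum_lt_sum
          (fun i hi => mul_le_mul_of_nonneg_left
            ((hh i hi).convexOn.2 hx hy ha.le hb.le hab) (hc i hi))
          ⟨i₀, hi₀, mul_lt_mul_of_pos_left ((hh i₀ hi₀).2 hx hy hxy ha hb hab) hc₀⟩
    _ = a • ∑ i ∈ t, c i * h i x + b • ∑ i ∈ t, c i * h i y := by
        simp only [smul_eq_mul, Finset.mul_sum, ← Finset.sum_add_distrib]
        exact Finset.sum_congr rfl fun i _ => by ring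

theorem strictAntiOn_add_zpow_neg_two (e : ℝ) :
    StrictAntiOn (fun σ : ℝ => (e + σ) ^ (-2 : ℤ)) (Ioi (-e)) := by
  intro x hx y _ hxy
  have hx : 0 < e + x := neg_lt_iff_pos_add'.mp hx
  have hsq : (e + x) ^ (2 : ℤ) < (e + y) ^ (2 : ℤ) :=
    zpow_lt_zpow_left₀ two_pos hx.le (by linarith)
  simp only [_root_.zpow_neg]
  gcongr

theorem strictConvexOn_add_zpow_neg_two (e : ℝ) :
    StrictConvexOn ℝ (Ioi (-e)) (fun σ : ℝ => (e + σ) ^ (-2 : ℤ)) := by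
  have hs : (fun z => e + z) ⁻¹' Ioi 0 = Ioi (-e) := by ext; simp [neg_lt_iff_pos_add']
  simpa only [hs, Function.comp_def] using
    (strictConvexOn_zpow (m := -2) (by norm_num) (by norm_num)).translate_right e

namespace Matrix

variable {n : Type*} [Fintype n] [DecidableEq n]

theorem inv_diagonal_of_ne_zero {K : Type*} [Field K] {d : n → K} (hd : ∀ i, d i ≠ 0) :
    (diagonal d)⁻¹ = diagonal d⁻¹ :=
  inv_eq_left_inv <| by
    rw [diagonal_mul_diagonal, ← diagonal_one]
    exact congrArg diagonal (funext fun i => inv_mul_cancel₀ (hd i))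

section Unitary

variable {R : Type*} [CommRing R] [StarRing R] (U : unitaryGroup n R)

theorem inv_conj_unitary (M : Matrix n n R) :
    ((U : Matrix n n R) * M * star (U : Matrix n n R))⁻¹ =
      U * M⁻¹ * star (U : Matrix n n R) := by
  rw [Matrix.mul_inv_rev, Matrix.mul_inv_rev, inv_eq_left_inv (Unitary.mul_star_self_of_mem U.2),
    inv_eq_left_inv (Unitary.star_mul_self_of_mem U.2), Matrix.mul_assoc]

theorem conj_unitary_mul_conj_unitary (M N : Matrix n n R) :
    ((U : Matrix n n R) * M * star (U : Matrix n n R)) * (U * N * star (U : Matrix n n R)) =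
      U * (M * N) * star (U : Matrix n n R) := by
  simp only [Matrix.mul_assoc, ← Matrix.mul_assoc (star (U : Matrix n n R)) (U : Matrix n n R),
    Unitary.star_mul_self_of_mem U.2, Matrix.one_mul]

end Unitary

theorem dotProduct_conj_diagonal_mulVec {R : Type*} [CommSemiring R] (U : Matrix n n R)
    (d f : n → R) : f ⬝ᵥ ((U * diagonal d * Uᵀ) *ᵥ f) = ∑ i, (Uᵀ *ᵥ f) i ^ 2 * d i := by
  rw [← mulVec_mulVec, ← mulVec_mulVec, dotProduct_mulVec, ← mulVec_transpose]
  simp only [dotProduct, mulVec_diagonal]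
  exact Finset.sum_congr rfl fun i _ => by ring

theorem IsHermitian.add_smul_one_eq {𝕜 : Type*} [RCLike 𝕜] {A : Matrix n n 𝕜}
    (hA : A.IsHermitian) (σ : 𝕜) :
    A + σ • (1 : Matrix n n 𝕜) = hA.eigenvectorUnitary *
      diagonal (fun i => (hA.eigenvalues i : 𝕜) + σ) *
        star (hA.eigenvectorUnitary : Matrix n n 𝕜) := by
  set U : Matrix n n 𝕜 := (hA.eigenvectorUnitary : Matrix n n 𝕜)
  have hσ : σ • (1 : Matrix n n 𝕜) = U * diagonal (fun _ => σ) * star U := by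
    rw [← smul_one_eq_diagonal, Matrix.mul_smul, Matrix.mul_one, Matrix.smul_mul,
      Unitary.mul_star_self_of_mem hA.eigenvectorUnitary.2]
  conv_lhs => rw [hA.spectral_theorem, Unitary.conjStarAlgAut_apply, hσ]
  rw [← Matrix.add_mul, ← Matrix.mul_add, diagonal_add]
  rfl

theorem IsHermitian.dotProduct_inv_add_smul_one_sq_mulVec {A : Matrix n n ℝ}
    (hA : A.IsHermitian) {σ : ℝ} (hσ : ∀ i, hA.eigenvalues i + σ ≠ 0) (f : n → ℝ) :
    f ⬝ᵥ (((A + σ • 1)⁻¹ * (A + σ • 1)⁻¹) *ᵥ f) =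
      ∑ i, ((hA.eigenvectorUnitary : Matrix n n ℝ)ᵀ *ᵥ f) i ^ 2 *
        (hA.eigenvalues i + σ) ^ (-2 : ℤ) := by
  rw [hA.add_smul_one_eq, inv_conj_unitary, conj_unitary_mul_conj_unitary]
  simp only [RCLike.ofReal_real_eq_id, id]
  rw [inv_diagonal_of_ne_zero hσ, diagonal_mul_diagonal, star_eq_conjTranspose,
    conjTranspose_eq_transpose_of_trivial, dotProduct_conj_diagonal_mulVec]
  simp only [Pi.inv_apply, _root_.zpow_neg, zpow_two, mul_inv]

end Matrix

theorem stmt_10_general {n : ℕ} (Q : Matrix (Fin n) (Fin n) ℝ) (f : Fin n → ℝ) (r : ℝ)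
    (hQsym : Q.IsSymm) (hf : f ≠ 0) (lam1 : ℝ)
    (hlam1_min : ∀ (μ : ℝ) (v : Fin n → ℝ), v ≠ 0 → Q.mulVec v = μ • v → lam1 ≤ μ)
    (ψ : ℝ → ℝ)
    (hψ : ∀ σ : ℝ, ψ σ = f ⬝ᵥ (((Q + σ • (1 : Matrix (Fin n) (Fin n) ℝ))⁻¹ *
      (Q + σ • (1 : Matrix (Fin n) (Fin n) ℝ))⁻¹).mulVec f) - r^2) :
    StrictAntiOn ψ (Set.Ioi (-lam1)) ∧ StrictConvexOn ℝ (Set.Ioi (-lam1)) ψ := by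
  have hQ : Q.IsHermitian := isHermitian_iff_isSymm.mpr hQsym
  set e := hQ.eigenvalues
  set U : Matrix (Fin n) (Fin n) ℝ := (hQ.eigenvectorUnitary : Matrix (Fin n) (Fin n) ℝ)
  set g := Uᵀ *ᵥ f
  have hsub (i) : Ioi (-lam1) ⊆ Ioi (-e i) :=
    Ioi_subset_Ioi <| neg_le_neg <| hlam1_min _ _
      (by simpa using hQ.eigenvectorBasis.orthonormal.ne_zero i) (hQ.mulVec_eigenvectorBasis i)
  have hψ_eq : EqOn (fun σ => ∑ i, g i ^ 2 * (e i + σ) ^ (-2 : ℤ) + -r ^ 2) ψ (Ioi (-lam1)) := by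
    intro σ hσ
    have he (i) : e i + σ ≠ 0 := (neg_lt_iff_pos_add'.mp (hsub i hσ)).ne'
    rw [hψ, hQ.dotProduct_inv_add_smul_one_sq_mulVec he, sub_eq_add_neg]
  have hg_ne : g ≠ 0 := fun hg0 => hf <| by
    have hUUt : U * Uᵀ = 1 := by
      rw [← conjTranspose_eq_transpose_of_trivial, ← star_eq_conjTranspose]
      exact Unitary.mul_star_self_of_mem hQ.eigenvectorUnitary.2
    rw [← one_mulVec f, ← hUUt, ← mulVec_mulVec]
    change U *ᵥ g = 0
    rw [hg0, mulVec_zero]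
  obtain ⟨i₀, hi₀ : g i₀ ≠ 0⟩ := Function.ne_iff.mp hg_ne
  have hg_pos : ∃ i ∈ Finset.univ, 0 < g i ^ 2 := ⟨i₀, Finset.mem_univ _, by positivity⟩
  have hg_nonneg : ∀ i ∈ Finset.univ, 0 ≤ g i ^ 2 := fun i _ => sq_nonneg _
  exact ⟨((strictAntiOn_sum_mul hg_nonneg hg_pos fun i _ =>
      (strictAntiOn_add_zpow_neg_two (e i)).mono (hsub i)).add_const _).congr hψ_eq,
    ((strictConvexOn_sum_mul hg_nonneg hg_pos fun i _ =>
      (strictConvexOn_add_zpow_neg_two (e i)).subset (hsub i) (convex_Ioi _)).add_const _).congr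
      hψ_eq⟩

/-- For f ≠ 0, ψ(σ) = fᵀ(Q+σI)⁻²f − r² is strictly decreasing and strictly convex on
(−λ₁, ∞), λ₁ the smallest eigenvalue of Q. -/
theorem stmt_10 {n : ℕ} (Q : Matrix (Fin n) (Fin n) ℝ) (f : Fin n → ℝ) (r : ℝ)
    (hQsym : Q.IsSymm) (hr : 0 < r) (hf : f ≠ 0) (lam1 : ℝ)
    (hlam1_eig : ∃ v : Fin n → ℝ, v ≠ 0 ∧ Q.mulVec v = lam1 • v)
    (hlam1_min : ∀ (μ : ℝ) (v : Fin n → ℝ), v ≠ 0 → Q.mulVec v = μ • v → lam1 ≤ μ)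
    (ψ : ℝ → ℝ)
    (hψ : ∀ σ : ℝ, ψ σ = f ⬝ᵥ (((Q + σ • (1 : Matrix (Fin n) (Fin n) ℝ))⁻¹ *
      (Q + σ • (1 : Matrix (Fin n) (Fin n) ℝ))⁻¹).mulVec f) - r^2) :
    StrictAntiOn ψ (Set.Ioi (-lam1)) ∧ StrictConvexOn ℝ (Set.Ioi (-lam1)) ψ :=
  stmt_10_general Q f r hQsym hf lam1 hlam1_min ψ hψ
end

section
/- Let h(y) = Σ_i μᵢ yᵢ² − 2Σ_i cᵢ yᵢ − 2β√(r² − ‖y‖²) on the open ball {y ∈ ℝ^m : ‖y‖ < r}, with all μᵢ > 0 and β > 0. Then h is strictly convex on the open ball, and any stationary point y* satisfies yᵢ* = cᵢ/(μᵢ + β(r² − ‖y*‖²)^{−1/2}) for each i; in particular |yᵢ*| < |cᵢ/μᵢ|. -/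
/-!
The polynomial part of `h` is a separable sum of strictly convex quadratics, and
`√(r² − ‖y‖²)` is concave on the ball as the square root of a nonnegative concave function,
so subtracting a positive multiple of it keeps `h` strictly convex. The `i`-th partial
derivative of `h` is `2 (μᵢ yᵢ − cᵢ + β yᵢ / √(r² − ‖y‖²))`; setting it to zero gives the
formula for `yᵢ`, and the extra positive term `β / √(r² − ‖y‖²)` in the denominator gives
`|yᵢ| < |cᵢ / μᵢ|`.
-/

open Matrix Set

theorem strictConvexOn_quadratic {μ : ℝ} (hμ : 0 < μ) (c : ℝ) :
    StrictConvexOn ℝ univ fun t : ℝ => μ * t ^ 2 - 2 * c * t := by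
  refine ⟨convex_univ, fun x _ y _ hxy a b ha hb hab => ?_⟩
  have hgap : a * (μ * x ^ 2 - 2 * c * x) + b * (μ * y ^ 2 - 2 * c * y)
      - (μ * (a * x + b * y) ^ 2 - 2 * c * (a * x + b * y)) = a * b * μ * (x - y) ^ 2 := by
    rw [← sub_eq_of_eq_add' hab.symm]; ring
  have hgap_pos : 0 < a * b * μ * (x - y) ^ 2 := by
    have := sub_ne_zero.2 hxy
    positivity
  simp only [smul_eq_mul]
  linarith

section Coordinatewise

variable {ι : Type*} [Fintype ι]

theorem strictConvexOn_sum_apply {f : ι → ℝ → ℝ} (hf : ∀ i, StrictConvexOn ℝ univ (f i)) :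
    StrictConvexOn ℝ univ fun y : ι → ℝ => ∑ i, f i (y i) := by
  refine ⟨convex_univ, fun x _ y _ hxy a b ha hb hab => ?_⟩
  obtain ⟨i₀, hi₀⟩ := Function.ne_iff.1 hxy
  simp only [smul_eq_mul, Finset.mul_sum, ← Finset.sum_add_distrib]
  refine Finset.sum_lt_sum (fun i _ => ?_) ⟨i₀, Finset.mem_univ _, ?_⟩
  · exact (hf i).convexOn.2 (mem_univ _) (mem_univ _) ha.le hb.le hab
  · exact (hf i₀).2 (mem_univ _) (mem_univ _) hi₀ ha hb hab

theorem strictConvexOn_dotProduct_self : StrictConvexOn ℝ univ fun y : ι → ℝ => y ⬝ᵥ y := by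
  simpa only [dotProduct, ← sq] using
    strictConvexOn_sum_apply fun _ : ι => Even.strictConvexOn_pow even_two two_ne_zero

theorem hasFDerivAt_sum_apply {g : ι → ℝ → ℝ} {g' : ι → ℝ} {y : ι → ℝ}
    (hg : ∀ i, HasDerivAt (g i) (g' i) (y i)) :
    HasFDerivAt (fun z : ι → ℝ => ∑ i, g i (z i))
      (∑ i, g' i • (ContinuousLinearMap.proj i : (ι → ℝ) →L[ℝ] ℝ)) y :=
  HasFDerivAt.fun_sum fun i _ => (hg i).comp_hasFDerivAt y (hasFDerivAt_apply i y)

end Coordinatewise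

theorem ConcaveOn.sqrt {E : Type*} [AddCommMonoid E] [Module ℝ E] {s : Set E} {f : E → ℝ}
    (hf : ConcaveOn ℝ s f) (hf₀ : ∀ x ∈ s, 0 ≤ f x) : ConcaveOn ℝ s fun x => √(f x) := by
  refine ⟨hf.1, fun x hx y hy a b ha hb hab => ?_⟩
  calc a • √(f x) + b • √(f y) ≤ √(a • f x + b • f y) :=
        Real.strictConcaveOn_sqrt.concaveOn.2 (hf₀ x hx) (hf₀ y hy) ha hb hab
    _ ≤ √(f (a • x + b • y)) := Real.sqrt_le_sqrt (hf.2 hx hy ha hb hab)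

theorem abs_div_add_lt_abs_div {μ δ c : ℝ} (hμ : 0 < μ) (hδ : 0 < δ) (hc : c ≠ 0) :
    |c / (μ + δ)| < |c / μ| := by
  rw [abs_div, abs_div, abs_of_pos (add_pos hμ hδ), abs_of_pos hμ]
  exact div_lt_div_of_pos_left (abs_pos.2 hc) hμ (lt_add_of_pos_right μ hδ)

section ReducedObjective

variable {ι : Type*} [Fintype ι]

noncomputable def reducedObjective (μ c : ι → ℝ) (β r : ℝ) (y : ι → ℝ) : ℝ :=
  ∑ i, μ i * y i ^ 2 - 2 * ∑ i, c i * y i - 2 * β * √(r ^ 2 - y ⬝ᵥ y)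

variable {μ c : ι → ℝ} {β r : ℝ}

theorem strictConvexOn_reducedObjective (hμ : ∀ i, 0 < μ i) (hβ : 0 ≤ β) :
    StrictConvexOn ℝ {y | y ⬝ᵥ y < r ^ 2} (reducedObjective μ c β r) := by
  have hball : Convex ℝ {y : ι → ℝ | y ⬝ᵥ y < r ^ 2} := by
    simpa using strictConvexOn_dotProduct_self.convex_lt (r ^ 2)
  have hquad : StrictConvexOn ℝ univ fun y : ι → ℝ => ∑ i, (μ i * y i ^ 2 - 2 * c i * y i) :=
    strictConvexOn_sum_apply fun i => strictConvexOn_quadratic (hμ i) (c i)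
  have hroot : ConcaveOn ℝ {y : ι → ℝ | y ⬝ᵥ y < r ^ 2} fun y => √(r ^ 2 - y ⬝ᵥ y) :=
    ((concaveOn_const _ hball).sub
      (strictConvexOn_dotProduct_self.convexOn.subset (subset_univ _) hball)).sqrt
      fun y hy => sub_nonneg.2 hy.le
  have hsplit : reducedObjective μ c β r =
      (fun y => ∑ i, (μ i * y i ^ 2 - 2 * c i * y i)) -
        (2 * β) • fun y => √(r ^ 2 - y ⬝ᵥ y) := by
    funext y
    simp only [reducedObjective, Finset.sum_sub_distrib, Finset.mul_sum, Pi.sub_apply,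
      Pi.smul_apply, smul_eq_mul, mul_assoc]
  rw [hsplit]
  exact (hquad.subset (subset_univ _) hball).sub_concaveOn (hroot.smul (by positivity))

theorem fderiv_reducedObjective_apply_single [DecidableEq ι] {y : ι → ℝ}
    (hy : y ⬝ᵥ y < r ^ 2) (i : ι) :
    fderiv ℝ (reducedObjective μ c β r) y (Pi.single i 1) =
      2 * (μ i * y i - c i + β * y i / √(r ^ 2 - y ⬝ᵥ y)) := by
  have hsq : HasFDerivAt (fun z : ι → ℝ => z ⬝ᵥ z) _ y :=
    hasFDerivAt_sum_apply fun j => (hasDerivAt_id (y j)).mul (hasDerivAt_id (y j))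
  have hquad := hasFDerivAt_sum_apply (g := fun j t => μ j * t ^ 2) fun j =>
    (hasDerivAt_pow 2 (y j)).const_mul (μ j)
  have hlin := hasFDerivAt_sum_apply (g := fun j t => c j * t) fun j =>
    (hasDerivAt_id (y j)).const_mul (c j)
  have hroot := (Real.hasDerivAt_sqrt (sub_pos.2 hy).ne').comp_hasFDerivAt y
    ((hasFDerivAt_const (r ^ 2) y).sub hsq)
  have hobj : HasFDerivAt (reducedObjective μ c β r) _ y :=
    (hquad.sub (hlin.const_mul 2)).sub (hroot.const_mul (2 * β))
  rw [hobj.fderiv]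
  simp only [_root_.sub_apply, _root_.smul_apply, _root_.sum_apply, _root_.zero_apply,
    ContinuousLinearMap.proj_apply, Pi.single_apply, smul_eq_mul, mul_ite, mul_one, mul_zero,
    Finset.sum_ite_eq', Finset.mem_univ, if_true, id_eq]
  field_simp
  ring

theorem eq_div_of_fderiv_reducedObjective_eq_zero [DecidableEq ι] {y : ι → ℝ} {i : ι}
    (hμ : 0 < μ i) (hβ : 0 ≤ β) (hy : y ⬝ᵥ y < r ^ 2)
    (hcrit : fderiv ℝ (reducedObjective μ c β r) y = 0) :
    y i = c i / (μ i + β / √(r ^ 2 - y ⬝ᵥ y)) := by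
  have hpartial : 2 * (μ i * y i - c i + β * y i / √(r ^ 2 - y ⬝ᵥ y)) = 0 := by
    rw [← fderiv_reducedObjective_apply_single hy, hcrit, _root_.zero_apply]
  have hden : 0 < μ i + β / √(r ^ 2 - y ⬝ᵥ y) := by positivity
  rw [eq_div_iff hden.ne']
  linear_combination hpartial / 2

end ReducedObjective

/-- The reduced perturbed function
h(y) = Σ μᵢyᵢ² − 2Σ cᵢyᵢ − 2β√(r² − ‖y‖²) (μᵢ > 0, β > 0) is strictly convex on the
open ball ‖y‖ < r, and any stationary point y* there satisfies
y*ᵢ = cᵢ/(μᵢ + β(r² − ‖y*‖²)^{−1/2}); in particular |y*ᵢ| < |cᵢ/μᵢ| when cᵢ ≠ 0. -/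
theorem stmt_18 {m : ℕ} (μ c : Fin m → ℝ) (β r : ℝ) (hr : 0 < r) (hβ : 0 < β)
    (hμ : ∀ i, 0 < μ i)
    (h : (Fin m → ℝ) → ℝ)
    (hh : ∀ y : Fin m → ℝ, h y = ∑ i, μ i * (y i)^2 - 2 * ∑ i, c i * y i
      - 2 * β * Real.sqrt (r^2 - y ⬝ᵥ y)) :
    StrictConvexOn ℝ {y : Fin m → ℝ | Real.sqrt (y ⬝ᵥ y) < r} h ∧
    ∀ y : Fin m → ℝ, Real.sqrt (y ⬝ᵥ y) < r → fderiv ℝ h y = 0 →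
      ∀ i, y i = c i / (μ i + β / Real.sqrt (r^2 - y ⬝ᵥ y)) ∧
        (c i ≠ 0 → |y i| < |c i / μ i|) := by
  obtain rfl : h = reducedObjective μ c β r := funext hh
  have hball : {y : Fin m → ℝ | √(y ⬝ᵥ y) < r} = {y | y ⬝ᵥ y < r ^ 2} := by
    ext y
    exact Real.sqrt_lt' hr
  refine ⟨hball ▸ strictConvexOn_reducedObjective hμ hβ.le, fun y hy hcrit i => ?_⟩
  have hy' : y ⬝ᵥ y < r ^ 2 := (Real.sqrt_lt' hr).1 hy
  have hyi := eq_div_of_fderiv_reducedObjective_eq_zero (hμ i) hβ.le hy' hcrit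
  refine ⟨hyi, fun hc => hyi ▸ abs_div_add_lt_abs_div (hμ i) ?_ hc⟩
  exact div_pos hβ (Real.sqrt_pos.2 (sub_pos.2 hy'))
end
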